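/- Let (Ω, 𝒫) be a probability space and let Y, Z, G : Ω → {0,1} be measurable random variables such that G and Z are conditionally independent given Y, and assume 𝒫(Y=0), 𝒫(Y=1), 𝒫(Z=0), 𝒫(Z=1) > 0. If the classifier's true positive rate equals its true negative rate, i.e., 𝒫(G=1 | Y=1) = 𝒫(G=0 | Y=0), then the accuracies on the two subpopulations are equal: 𝒫(Y=G | Z=1) = 𝒫(Y=G | Z=0). -/

import Mathlib

open MeasureTheory

/-- Conditional probability `𝒫(A | B)` as a real number. -/
noncomputable def condProb {Ω : Type*} [MeasurableSpace Ω] (μ : Measure Ω)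
    (A B : Set Ω) : ℝ :=
  (μ (A ∩ B)).toReal / (μ B).toReal

/-!
Split the event `{Y = G}` along the label. Conditional independence of `G` and `Z` given `Y`
turns the mass of `{G = y, Z = z, Y = y}` into `𝒫(G = y | Y = y) · 𝒫(Z = z, Y = y)`. When the
two rates agree, their common value `t` factors out of the sum, which leaves `t · 𝒫(Z = z)`, so the
accuracy on either subpopulation is `t`.
-/

section

variable {Ω : Type*} [MeasurableSpace Ω] {μ : Measure Ω}

lemma condProb_eq_measureReal_div (A B : Set Ω) :
    condProb μ A B = μ.real (A ∩ B) / μ.real B := rfl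

lemma measureReal_inter_inter_eq_condProb_mul [IsFiniteMeasure μ] {A B C : Set Ω}
    (h : condProb μ (A ∩ B) C = condProb μ A C * condProb μ B C) :
    μ.real (A ∩ B ∩ C) = condProb μ A C * μ.real (B ∩ C) := by
  by_cases hC : μ.real C = 0
  · rw [measureReal_mono_null Set.inter_subset_right hC,
      measureReal_mono_null Set.inter_subset_right hC, mul_zero]
  · simp only [condProb_eq_measureReal_div] at h ⊢
    field_simp at h ⊢
    linear_combination h

lemma measureReal_eq_add_inter_label [IsFiniteMeasure μ] {Y : Ω → Bool} (hY : Measurable Y)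
    (s : Set Ω) :
    μ.real s = μ.real (s ∩ {ω | Y ω = true}) + μ.real (s ∩ {ω | Y ω = false}) := by
  have hfalse : {ω | Y ω = false} = {ω | Y ω = true}ᶜ := by ext; simp
  rw [hfalse, ← Set.sdiff_eq]
  exact (measureReal_inter_add_sdiff (hY (measurableSet_singleton true))).symm

lemma accuracy_eq_tpr_of_tpr_eq_tnr [IsFiniteMeasure μ] {Y G : Ω → Bool} {S : Set Ω}
    (hY : Measurable Y)
    (hCI : ∀ y : Bool, condProb μ ({ω | G ω = y} ∩ S) {ω | Y ω = y} =
      condProb μ {ω | G ω = y} {ω | Y ω = y} * condProb μ S {ω | Y ω = y})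
    (hrate : condProb μ {ω | G ω = true} {ω | Y ω = true} =
      condProb μ {ω | G ω = false} {ω | Y ω = false})
    (hS : μ S ≠ 0) :
    condProb μ {ω | Y ω = G ω} S = condProb μ {ω | G ω = true} {ω | Y ω = true} := by
  have hcorrect (y : Bool) :
      {ω | Y ω = G ω} ∩ S ∩ {ω | Y ω = y} = {ω | G ω = y} ∩ S ∩ {ω | Y ω = y} := by
    ext ω
    simp only [Set.mem_inter_iff, Set.mem_ofPred_eq]
    constructor <;> rintro ⟨⟨hYG, hω⟩, rfl⟩ <;> exact ⟨⟨hYG.symm, hω⟩, rfl⟩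
  have hS' : μ.real S ≠ 0 := (measureReal_eq_zero_iff).not.mpr hS
  rw [condProb_eq_measureReal_div, measureReal_eq_add_inter_label hY ({ω | Y ω = G ω} ∩ S),
    hcorrect, hcorrect, measureReal_inter_inter_eq_condProb_mul (hCI true),
    measureReal_inter_inter_eq_condProb_mul (hCI false), ← hrate, ← mul_add,
    ← measureReal_eq_add_inter_label hY S, mul_div_assoc, div_self hS', mul_one]

end

theorem equal_tpr_tnr_no_gap_general {Ω : Type*} [MeasurableSpace Ω]
    (μ : Measure Ω) [IsProbabilityMeasure μ] (Y Z G : Ω → Bool)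
    (hY : Measurable Y)
    (hCI : ∀ g z y : Bool,
      condProb μ ({ω | G ω = g} ∩ {ω | Z ω = z}) {ω | Y ω = y} =
        condProb μ {ω | G ω = g} {ω | Y ω = y} *
          condProb μ {ω | Z ω = z} {ω | Y ω = y})
    (hZ1 : 0 < μ {ω | Z ω = true}) (hZ0 : 0 < μ {ω | Z ω = false})
    (hrate : condProb μ {ω | G ω = true} {ω | Y ω = true} =
      condProb μ {ω | G ω = false} {ω | Y ω = false}) :
    condProb μ {ω | Y ω = G ω} {ω | Z ω = true} =
      condProb μ {ω | Y ω = G ω} {ω | Z ω = false} := by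
  rw [accuracy_eq_tpr_of_tpr_eq_tnr hY (fun y => hCI y true y) hrate hZ1.ne',
    accuracy_eq_tpr_of_tpr_eq_tnr hY (fun y => hCI y false y) hrate hZ0.ne']

/-- **Equal TPR and TNR implies no accuracy gap.** If the prediction `G` and
the subpopulation indicator `Z` are conditionally independent given the label
`Y`, and the true positive rate equals the true negative rate,
`𝒫(G=1 | Y=1) = 𝒫(G=0 | Y=0)`, then the accuracies on the two subpopulations
are equal: `𝒫(Y=G | Z=1) = 𝒫(Y=G | Z=0)`. -/
theorem equal_tpr_tnr_no_gap {Ω : Type*} [MeasurableSpace Ω]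
    (μ : Measure Ω) [IsProbabilityMeasure μ] (Y Z G : Ω → Bool)
    (hY : Measurable Y) (hZ : Measurable Z) (hG : Measurable G)
    (hCI : ∀ g z y : Bool,
      condProb μ ({ω | G ω = g} ∩ {ω | Z ω = z}) {ω | Y ω = y} =
        condProb μ {ω | G ω = g} {ω | Y ω = y} *
          condProb μ {ω | Z ω = z} {ω | Y ω = y})
    (hY1 : 0 < μ {ω | Y ω = true}) (hY0 : 0 < μ {ω | Y ω = false})
    (hZ1 : 0 < μ {ω | Z ω = true}) (hZ0 : 0 < μ {ω | Z ω = false})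
    (hrate : condProb μ {ω | G ω = true} {ω | Y ω = true} =
      condProb μ {ω | G ω = false} {ω | Y ω = false}) :
    condProb μ {ω | Y ω = G ω} {ω | Z ω = true} =
      condProb μ {ω | Y ω = G ω} {ω | Z ω = false} :=
  equal_tpr_tnr_no_gap_general μ Y Z G hY hCI hZ1 hZ0 hrate
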